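/- arXiv:2308.13138 — 3 statements merged into one kernel-verified Lean document; each statement's English description precedes it below -/
import Mathlib

section
/- Let G be a topological group with the virtual Rokhlin property, and suppose N and N' are both closed finite-index subgroups of G with the Rokhlin property. Then N = N'. -/
/-- A topological group has the Rokhlin property if some element has dense
conjugacy class. -/
def RokhlinProperty (G : Type*) [Group G] [TopologicalSpace G] : Prop :=
  ∃ g : G, Dense {x : G | ∃ h : G, h * g * h⁻¹ = x}

/-- A topological group has the virtual Rokhlin property if it contains an open
finite-index subgroup with the Rokhlin property. -/
def VirtualRokhlinProperty (G : Type*) [Group G] [TopologicalSpace G] : Prop :=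
  ∃ N : Subgroup G, IsOpen (N : Set G) ∧ N.FiniteIndex ∧ RokhlinProperty N

/-!
A closed finite-index subgroup `N'` meets a Rokhlin group `N` in a closed finite-index subgroup
of `N`, whose normal core is again closed of finite index, hence open. The dense conjugacy class
of `N` meets this open normal subgroup, so lies in it, and the subgroup, being closed, is all of
`N`. Thus a Rokhlin subgroup lies in every closed finite-index subgroup, and two closed
finite-index Rokhlin subgroups contain each other.
-/

namespace RokhlinProperty

theorem eq_top_of_normal_of_isOpen {H : Type*} [Group H] [TopologicalSpace H]
    [SeparatelyContinuousMul H] (hR : RokhlinProperty H) {M : Subgroup H} (hMn : M.Normal)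
    (hMo : IsOpen (M : Set H)) : M = ⊤ := by
  obtain ⟨g, hg⟩ := hR
  obtain ⟨_, hxM, h, rfl⟩ := hg.inter_open_nonempty _ hMo ⟨1, M.one_mem⟩
  have hgM : g ∈ M := by simpa [mul_assoc] using hMn.conj_mem _ hxM h⁻¹
  have hconj : {x : H | ∃ h : H, h * g * h⁻¹ = x} ⊆ M := by
    rintro _ ⟨h, rfl⟩
    exact hMn.conj_mem g hgM h
  rw [← SetLike.coe_set_eq, Subgroup.coe_top, ← (M.isClosed_of_isOpen hMo).closure_eq]
  exact (hg.mono hconj).closure_eq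

theorem le_of_isClosed_of_finiteIndex {G : Type*} [Group G] [TopologicalSpace G]
    [IsTopologicalGroup G] {N N' : Subgroup G} (hNR : RokhlinProperty N)
    (hN'c : IsClosed (N' : Set G)) [N'.FiniteIndex] : N ≤ N' := by
  set K := N'.subgroupOf N
  have hKc : IsClosed (K : Set N) := hN'c.preimage continuous_subtype_val
  have hcore_open : IsOpen (K.normalCore : Set N) :=
    K.normalCore.isOpen_of_isClosed_of_finiteIndex (K.normalCore_isClosed hKc)
  have hcore : K.normalCore = ⊤ := hNR.eq_top_of_normal_of_isOpen K.normalCore_normal hcore_open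
  exact Subgroup.subgroupOf_eq_top.mp (top_le_iff.mp (hcore ▸ K.normalCore_le))

end RokhlinProperty

theorem stmt3_general {G : Type*} [Group G] [TopologicalSpace G] [IsTopologicalGroup G]
    (N N' : Subgroup G)
    (hNc : IsClosed (N : Set G)) (hNfi : N.FiniteIndex) (hNR : RokhlinProperty N)
    (hN'c : IsClosed (N' : Set G)) (hN'fi : N'.FiniteIndex) (hN'R : RokhlinProperty N') :
    N = N' :=
  le_antisymm (hNR.le_of_isClosed_of_finiteIndex hN'c) (hN'R.le_of_isClosed_of_finiteIndex hNc)

theorem stmt3 {G : Type*} [Group G] [TopologicalSpace G] [IsTopologicalGroup G]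
    (hvr : VirtualRokhlinProperty G)
    (N N' : Subgroup G)
    (hNc : IsClosed (N : Set G)) (hNfi : N.FiniteIndex) (hNR : RokhlinProperty N)
    (hN'c : IsClosed (N' : Set G)) (hN'fi : N'.FiniteIndex) (hN'R : RokhlinProperty N') :
    N = N' :=
  stmt3_general N N' hNc hNfi hNR hN'c hN'fi hN'R
end

section
/- Let G be a Polish group. If for any two nonempty open subsets U, V ⊆ G there exists σ ∈ G with U ∩ σVσ⁻¹ ≠ ∅, then G has an element with dense conjugacy class. -/
/-! For each nonempty open `V`, the elements whose conjugacy class meets `V` form an open set,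
and the joint embedding property makes it dense. Intersecting over a
countable basis, the Baire category theorem yields a comeagre set of elements whose conjugacy
class meets every basic open set. -/

open Filter Set TopologicalSpace

theorem eventually_residual_dense_of_forall_isOpen {X : Type*} [TopologicalSpace X]
    [SecondCountableTopology X] {O : X → Set X}
    (hO : ∀ V : Set X, IsOpen V → V.Nonempty → ∀ᶠ x in residual X, (O x ∩ V).Nonempty) :
    ∀ᶠ x in residual X, Dense (O x) := by
  obtain ⟨b, hbc, hb0, hb⟩ := exists_countable_basis X
  have hmeets : ∀ᶠ x in residual X, ∀ V ∈ b, (O x ∩ V).Nonempty :=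
    (eventually_countable_ball hbc).2 fun V hV =>
      hO V (hb.isOpen hV) (nonempty_iff_ne_empty.2 fun h => hb0 (h ▸ hV))
  filter_upwards [hmeets] with x hx
  exact hb.dense_iff.2 fun V hV _ => inter_comm V (O x) ▸ hx V hV

section Conjugacy

variable {G : Type*} [Group G]

theorem setOf_conjugatesOf_inter_nonempty (V : Set G) :
    {g : G | (conjugatesOf g ∩ V).Nonempty} = ⋃ c : G, (fun g => c * g * c⁻¹) ⁻¹' V := by
  ext g
  simp [conjugatesOf, isConj_iff, Set.Nonempty]

theorem isOpen_setOf_conjugatesOf_inter_nonempty [TopologicalSpace G] [ContinuousMul G]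
    {V : Set G} (hV : IsOpen V) :
    IsOpen {g : G | (conjugatesOf g ∩ V).Nonempty} := by
  rw [setOf_conjugatesOf_inter_nonempty]
  exact isOpen_iUnion fun c => hV.preimage (by fun_prop)

theorem dense_setOf_conjugatesOf_inter_nonempty [TopologicalSpace G]
    (hjep : ∀ U V : Set G, IsOpen U → IsOpen V → U.Nonempty → V.Nonempty →
      ∃ σ : G, (U ∩ ((fun v => σ * v * σ⁻¹) '' V)).Nonempty)
    {V : Set G} (hV : IsOpen V) (hVne : V.Nonempty) :
    Dense {g : G | (conjugatesOf g ∩ V).Nonempty} := by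
  rw [setOf_conjugatesOf_inter_nonempty, dense_iff_inter_open]
  intro U hU hUne
  obtain ⟨σ, x, hxU, v, hvV, rfl⟩ := hjep U V hU hV hUne hVne
  exact ⟨_, hxU, mem_iUnion.2 ⟨σ⁻¹, by simpa [mul_assoc] using hvV⟩⟩

end Conjugacy

theorem stmt7 {G : Type*} [Group G] [TopologicalSpace G] [IsTopologicalGroup G]
    [PolishSpace G]
    (hjep : ∀ U V : Set G, IsOpen U → IsOpen V → U.Nonempty → V.Nonempty →
      ∃ σ : G, (U ∩ ((fun v => σ * v * σ⁻¹) '' V)).Nonempty) :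
    ∃ g : G, Dense {x : G | ∃ h : G, h * g * h⁻¹ = x} := by
  have hgeneric : ∀ᶠ g in residual G, Dense (conjugatesOf g) :=
    eventually_residual_dense_of_forall_isOpen fun V hV hVne =>
      residual_of_dense_open (isOpen_setOf_conjugatesOf_inter_nonempty hV)
        (dense_setOf_conjugatesOf_inter_nonempty hjep hV hVne)
  obtain ⟨g, hg⟩ := (dense_of_mem_residual hgeneric).nonempty
  exact ⟨g, by simpa only [mem_ofPred_eq, conjugatesOf, isConj_iff] using hg⟩
end

section
/- Let G be a completely metrizable topological group with the virtual Rokhlin property and let H be a cm-slender group. Then every (abstract) group homomorphism φ : G → H is trivial. -/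
universe u v

/-- A topological space is completely metrizable if its topology is induced by a
complete metric. -/
def IsCompletelyMetrizable (X : Type*) [t : TopologicalSpace X] : Prop :=
  ∃ m : MetricSpace X, m.toUniformSpace.toTopologicalSpace = t ∧
    @CompleteSpace X m.toUniformSpace

/-- A group `H` is cm-slender if the kernel of every abstract group homomorphism
from a completely metrizable topological group to `H` is open. -/
def CmSlender (H : Type v) [Group H] : Prop :=
  ∀ (G : Type u) [Group G] [TopologicalSpace G] [IsTopologicalGroup G],
    IsCompletelyMetrizable G → ∀ φ : G →* H, IsOpen (φ.ker : Set G)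

/-! The kernel of `φ` is open, so its trace on `N` is an open normal subgroup of `N`, which a
dense conjugacy class forces to be all of `N`. Thus `φ` kills `N`, and as `N` has finite index,
every `φ g` has finite order. But a cm-slender group `H` is torsion-free: an element `h` of order
`m` gives, via a free ultrafilter on `ℕ`, a homomorphism `(ℕ → ZMod m) →* H` sending every
sequence that is eventually `1` to `h`. Such sequences converge to `0` in the completely
metrizable group `ℕ → ZMod m`, so the kernel is not open. -/

open Filter Topology

namespace TopologicalSpace.IsCompletelyMetrizableSpace

theorem isCompletelyMetrizable (X : Type*) [TopologicalSpace X] [IsCompletelyMetrizableSpace X] :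
    IsCompletelyMetrizable X :=
  IsCompletelyMetrizableSpace.complete

instance ulift (X : Type*) [TopologicalSpace X] [IsCompletelyMetrizableSpace X] :
    IsCompletelyMetrizableSpace (ULift X) :=
  Homeomorph.ulift.isClosedEmbedding.IsCompletelyMetrizableSpace

end TopologicalSpace.IsCompletelyMetrizableSpace

namespace Ultrafilter

variable {ι C : Type*} [TopologicalSpace C] [CompactSpace C]

theorem tendsto_limUnder [Nonempty C] (U : Ultrafilter ι) (x : ι → C) :
    Tendsto x U (𝓝 (limUnder (U : Filter ι) x)) := by
  obtain ⟨c, -, hc⟩ := isCompact_univ.ultrafilter_le_nhds (U.map x) (by simp)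
  exact tendsto_nhds_limUnder ⟨c, hc⟩

variable [Group C] [IsTopologicalGroup C] [T2Space C]

noncomputable def limMonoidHom (U : Ultrafilter ι) : (ι → C) →* C where
  toFun x := limUnder (U : Filter ι) x
  map_one' := tendsto_const_nhds.limUnder_eq
  map_mul' x y := ((U.tendsto_limUnder x).mul (U.tendsto_limUnder y)).limUnder_eq

theorem limMonoidHom_eq_of_eventuallyEq (U : Ultrafilter ι) {x : ι → C} {c : C}
    (hx : x =ᶠ[U] fun _ ↦ c) : U.limMonoidHom x = c :=
  (tendsto_const_nhds.congr' hx.symm).limUnder_eq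

theorem exists_mem_nhds_one_limMonoidHom_eq (U : Ultrafilter ι) (hU : (U : Filter ι) ≤ cofinite)
    {s : Set (ι → C)} (hs : s ∈ 𝓝 1) (c : C) : ∃ x ∈ s, U.limMonoidHom x = c := by
  classical
  let x : Finset ι → ι → C := fun F i ↦ if i ∈ F then 1 else c
  have hx : Tendsto x atTop (𝓝 1) := by
    refine tendsto_pi_nhds.2 fun i ↦ tendsto_const_nhds.congr' ?_
    filter_upwards [eventually_ge_atTop {i}] with F hF
    simp [x, Finset.singleton_subset_iff.1 hF]
  obtain ⟨F, hF⟩ := (hx.eventually_mem hs).exists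
  refine ⟨x F, hF, U.limMonoidHom_eq_of_eventuallyEq (hU ?_)⟩
  filter_upwards [F.finite_toSet.compl_mem_cofinite] with i (hi : i ∉ F)
  simp [x, hi]

end Ultrafilter

/-- `C` lives in `Type` so that `ULift.{u} (ℕ → C)` is a test group for `CmSlender.{u}`. -/
theorem CmSlender.map_eq_one_of_finite {H : Type v} [Group H] (hH : CmSlender.{u} H)
    {C : Type} [Group C] [Finite C] (f : C →* H) (c : C) : f c = 1 := by
  let : TopologicalSpace C := ⊥
  have : DiscreteTopology C := ⟨rfl⟩
  let U := hyperfilter ℕ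
  let ψ : ULift.{u} (ℕ → C) →* H := (f.comp U.limMonoidHom).comp MulEquiv.ulift.toMonoidHom
  have hker : IsOpen (ψ.ker : Set (ULift.{u} (ℕ → C))) :=
    hH _ (TopologicalSpace.IsCompletelyMetrizableSpace.isCompletelyMetrizable _) ψ
  have hnhds : ULift.up ⁻¹' (ψ.ker : Set (ULift.{u} (ℕ → C))) ∈ 𝓝 1 :=
    (hker.preimage continuous_uliftUp).mem_nhds ψ.ker.one_mem
  obtain ⟨x, hx, hxc⟩ := U.exists_mem_nhds_one_limMonoidHom_eq hyperfilter_le_cofinite hnhds c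
  exact hxc ▸ hx

theorem CmSlender.eq_one_of_pow_eq_one {H : Type v} [Group H] (hH : CmSlender.{u} H)
    {h : H} {n : ℕ} (hn : n ≠ 0) (hp : h ^ n = 1) : h = 1 := by
  have : NeZero n := ⟨hn⟩
  let f : Multiplicative (ZMod n) →* H := AddMonoidHom.toMultiplicativeLeft <| ZMod.lift n
    ⟨zmultiplesHom (Additive H) (Additive.ofMul h), by simpa using congrArg Additive.ofMul hp⟩
  have hf : f (Multiplicative.ofAdd 1) = h := by
    rw [← Int.cast_one]
    simp only [f, AddMonoidHom.coe_toMultiplicativeLeft, Function.comp_apply, toAdd_ofAdd,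
      ZMod.lift_coe]
    simp
  rw [← hf]
  exact hH.map_eq_one_of_finite f _

theorem Subgroup.eq_top_of_isOpen_of_dense_conj {K : Type*} [Group K] [TopologicalSpace K]
    [IsTopologicalGroup K] {g : K} (hg : Dense {x | ∃ h, h * g * h⁻¹ = x})
    (M : Subgroup K) [M.Normal] (hM : IsOpen (M : Set K)) : M = ⊤ := by
  obtain ⟨_, ⟨k, rfl⟩, hk⟩ := hg.exists_mem_open hM ⟨1, M.one_mem⟩
  have hgM : g ∈ M := by simpa [mul_assoc] using ‹M.Normal›.conj_mem _ hk k⁻¹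
  have hconj : {x | ∃ h, h * g * h⁻¹ = x} ⊆ (M : Set K) := by
    rintro _ ⟨h, rfl⟩
    exact ‹M.Normal›.conj_mem g hgM h
  refine (eq_top_iff' M).2 fun x ↦ closure_minimal hconj (M.isClosed_of_isOpen hM) ?_
  simp [hg.closure_eq]

theorem stmt13 {G : Type u} [Group G] [TopologicalSpace G] [IsTopologicalGroup G]
    (hcm : IsCompletelyMetrizable G)
    (hvr : ∃ N : Subgroup G, IsOpen (N : Set G) ∧ N.FiniteIndex ∧
      ∃ g : N, Dense {x : N | ∃ h : N, h * g * h⁻¹ = x})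
    {H : Type v} [Group H] (hH : CmSlender.{u} H)
    (φ : G →* H) :
    ∀ g : G, φ g = 1 := by
  obtain ⟨N, -, hNfin, g, hg⟩ := hvr
  have hker : IsOpen (φ.ker : Set G) := hH G hcm φ
  have hN : ∀ x : N, φ x = 1 := by
    have hNker := Subgroup.eq_top_of_isOpen_of_dense_conj hg (φ.comp N.subtype).ker
      (hker.preimage continuous_subtype_val)
    exact DFunLike.congr_fun (MonoidHom.ker_eq_top_iff.mp hNker)
  intro x
  obtain ⟨k, hk, -, hxk⟩ := Subgroup.exists_pow_mem_of_index_ne_zero hNfin.index_ne_zero x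
  exact hH.eq_one_of_pow_eq_one hk.ne' (by rw [← map_pow]; exact hN ⟨_, hxk⟩)
end
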